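/- In the polynomial ring ℤ[x,y], the following identity holds: 20·P₃(x)P₃(y) = 20 − (x−y)²F(x,y) + P₂(x)P₄(x) − 6P₃(x)·yP₂(x) + 15P₄(x)P₂(y) + 15P₂(x)P₄(y) − 6xP₂(y)·P₃(y) + P₂(y)P₄(y) + 14P₄(x) − 38P₃(x)y + 60P₂(x)P₂(y) − 38xP₃(y) + 14P₄(y) + 38P₂(x) − 48xy + 38P₂(y). -/
import Mathlib


/-- `P₂(t) = t² - 1`. -/
def P2 {R : Type*} [CommRing R] (t : R) : R := t ^ 2 - 1
/-- `P₃(t) = t³ - 2t`. -/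
def P3 {R : Type*} [CommRing R] (t : R) : R := t ^ 3 - 2 * t
/-- `P₄(t) = t⁴ - 3t² + 1`. -/
def P4 {R : Type*} [CommRing R] (t : R) : R := t ^ 4 - 3 * t ^ 2 + 1
/-- `F(x,y) = (x-y)²((x-y)² - 5)`. -/
def Fpol {R : Type*} [CommRing R] (x y : R) : R := (x - y) ^ 2 * ((x - y) ^ 2 - 5)

/-- The variable `x` of `ℤ[x,y]`. -/
noncomputable def xZ : MvPolynomial (Fin 2) ℤ := MvPolynomial.X 0
/-- The variable `y` of `ℤ[x,y]`. -/
noncomputable def yZ : MvPolynomial (Fin 2) ℤ := MvPolynomial.X 1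

/-- The key identity in `ℤ[x,y]` used to prove `Sym³π ≅ Sym³π′`. -/
theorem twenty_P3_P3_identity :
    20 * (P3 xZ * P3 yZ) =
      20 - (xZ - yZ) ^ 2 * Fpol xZ yZ + P2 xZ * P4 xZ - 6 * P3 xZ * (yZ * P2 xZ)
        + 15 * (P4 xZ * P2 yZ) + 15 * (P2 xZ * P4 yZ) - 6 * (xZ * P2 yZ) * P3 yZ
        + P2 yZ * P4 yZ + 14 * P4 xZ - 38 * (P3 xZ * yZ) + 60 * (P2 xZ * P2 yZ)
        - 38 * (xZ * P3 yZ) + 14 * P4 yZ + 38 * P2 xZ - 48 * (xZ * yZ) + 38 * P2 yZ := by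
  simp only [P2, P3, P4, Fpol, xZ, yZ]; ring
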